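/- For A₁(η) = (1/6)[[-1-e^{2iη}, 2(1+e^{2iη}), 5-e^{2iη}],[2(1+e^{2iη}), 2(1-2e^{2iη}), 2(1+e^{2iη})],[5-e^{2iη}, 2(1+e^{2iη}), -1-e^{2iη}]] with entries nonzero, and any function φ : ℤ → ℂ not identically zero, the function Ψ(x) = (φ(x), (1/2)(φ(x)+φ(x-1)), φ(x-1)) satisfies U_{A₁(η)}Ψ = Ψ. Consequently, the stationary measure μ(x) = (5/4)(|φ(x)|² + |φ(x-1)|²) + (1/2)Re(φ(x)·conj(φ(x-1))) is independent of the parameter η. -/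

import Mathlib

open Complex Matrix Finset

noncomputable def walk (A : Matrix (Fin 3) (Fin 3) ℂ) (Ψ : ℤ → Fin 3 → ℂ) : ℤ → Fin 3 → ℂ :=
  fun x => ![∑ j, A 0 j * Ψ (x + 1) j, ∑ j, A 1 j * Ψ x j, ∑ j, A 2 j * Ψ (x - 1) j]

noncomputable def A₁ (η : ℝ) : Matrix (Fin 3) (Fin 3) ℂ :=
  (1 / 6 : ℂ) • !![-1 - Complex.exp (2 * Complex.I * η), 2 * (1 + Complex.exp (2 * Complex.I * η)),
      5 - Complex.exp (2 * Complex.I * η);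
    2 * (1 + Complex.exp (2 * Complex.I * η)), 2 * (1 - 2 * Complex.exp (2 * Complex.I * η)),
      2 * (1 + Complex.exp (2 * Complex.I * η));
    5 - Complex.exp (2 * Complex.I * η), 2 * (1 + Complex.exp (2 * Complex.I * η)),
      -1 - Complex.exp (2 * Complex.I * η)]

/-!
The coin splits as `A₁ η = (1/6) • (A₁Base + e^{2iη} • A₁Phase)`. Every row of `A₁Phase` is
orthogonal to all vectors `(a, (a + b)/2, b)`, and every value `Ψ y` has this shape, so the phase part
contributes nothing to the walk; the η-free part `(1/6) • A₁Base` fixes `Ψ` by a direct computation.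
The stationary measure is then a pointwise norm identity, with no η in it.
-/

lemma walk_add (A B : Matrix (Fin 3) (Fin 3) ℂ) (Ψ : ℤ → Fin 3 → ℂ) :
    walk (A + B) Ψ = walk A Ψ + walk B Ψ := by
  funext x i
  fin_cases i <;> simp [walk, add_mul, sum_add_distrib]

lemma walk_smul (c : ℂ) (A : Matrix (Fin 3) (Fin 3) ℂ) (Ψ : ℤ → Fin 3 → ℂ) :
    walk (c • A) Ψ = c • walk A Ψ := by
  funext x i
  fin_cases i <;> simp [walk, mul_sum, mul_assoc]

def A₁Base : Matrix (Fin 3) (Fin 3) ℂ :=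
  !![-1, 2, 5; 2, 2, 2; 5, 2, -1]

def A₁Phase : Matrix (Fin 3) (Fin 3) ℂ :=
  !![-1, 2, -1; 2, -4, 2; -1, 2, -1]

lemma A₁_eq (η : ℝ) :
    A₁ η = (1 / 6 : ℂ) • (A₁Base + Complex.exp (2 * Complex.I * η) • A₁Phase) := by
  ext i j
  fin_cases i <;> fin_cases j <;> simp [A₁, A₁Base, A₁Phase] <;> ring

noncomputable def type2State (φ : ℤ → ℂ) : ℤ → Fin 3 → ℂ :=
  fun x => ![φ x, (1 / 2 : ℂ) * (φ x + φ (x - 1)), φ (x - 1)]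

lemma walk_A₁Phase_type2State (φ : ℤ → ℂ) : walk A₁Phase (type2State φ) = 0 := by
  funext x i
  fin_cases i <;> simp [walk, A₁Phase, type2State, Fin.sum_univ_three]
  all_goals ring

lemma walk_A₁Base_type2State (φ : ℤ → ℂ) :
    walk ((1 / 6 : ℂ) • A₁Base) (type2State φ) = type2State φ := by
  funext x i
  fin_cases i <;> simp [walk, A₁Base, type2State, Fin.sum_univ_three] <;> ring

theorem walk_A₁_type2State (η : ℝ) (φ : ℤ → ℂ) : walk (A₁ η) (type2State φ) = type2State φ := by
  rw [A₁_eq, smul_add, walk_add, smul_smul, walk_smul _ A₁Phase, walk_A₁Phase_type2State,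
    smul_zero, add_zero, walk_A₁Base_type2State]

lemma norm_sq_add_norm_sq_midpoint_add_norm_sq (a b : ℂ) :
    ‖a‖ ^ 2 + ‖(1 / 2 : ℂ) * (a + b)‖ ^ 2 + ‖b‖ ^ 2 =
      (5 / 4) * (‖a‖ ^ 2 + ‖b‖ ^ 2) + (1 / 2) * (a * (starRingEnd ℂ) b).re := by
  simp only [← normSq_eq_norm_sq, normSq_apply, mul_re, mul_im, add_re, add_im, conj_re, conj_im]
  norm_num
  ring

theorem A₁_type2_stationary_general (η : ℝ)
    (φ : ℤ → ℂ)
    (Ψ : ℤ → Fin 3 → ℂ)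
    (hΨ : Ψ = fun x => ![φ x, (1 / 2 : ℂ) * (φ x + φ (x - 1)), φ (x - 1)]) :
    walk (A₁ η) Ψ = Ψ ∧
    ∀ x : ℤ, ∑ i, ‖Ψ x i‖ ^ 2 =
      (5 / 4) * (‖φ x‖ ^ 2 + ‖φ (x - 1)‖ ^ 2) + (1 / 2) * (φ x * (starRingEnd ℂ) (φ (x - 1))).re := by
  have hΨ' : Ψ = type2State φ := hΨ
  subst hΨ'
  refine ⟨walk_A₁_type2State η φ, fun x => ?_⟩
  simpa [type2State, Fin.sum_univ_three] using
    norm_sq_add_norm_sq_midpoint_add_norm_sq (φ x) (φ (x - 1))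

theorem A₁_type2_stationary (η : ℝ) (hne : ∀ i j, A₁ η i j ≠ 0)
    (φ : ℤ → ℂ) (hφ : ∃ x, φ x ≠ 0)
    (Ψ : ℤ → Fin 3 → ℂ)
    (hΨ : Ψ = fun x => ![φ x, (1 / 2 : ℂ) * (φ x + φ (x - 1)), φ (x - 1)]) :
    walk (A₁ η) Ψ = Ψ ∧
    ∀ x : ℤ, ∑ i, ‖Ψ x i‖ ^ 2 =
      (5 / 4) * (‖φ x‖ ^ 2 + ‖φ (x - 1)‖ ^ 2) + (1 / 2) * (φ x * (starRingEnd ℂ) (φ (x - 1))).re :=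
  A₁_type2_stationary_general η φ Ψ hΨ
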